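/- arXiv:2112.15415 — 2 statements merged into one kernel-verified Lean document; each statement's English description precedes it below -/
import Mathlib

section
/- Let F : ℝ^{k₁}×ℝ^{k₂}×ℝ^{k₃} → ℝ^{k₁}×ℝ^{k₂}×ℝ^{k₃} be given by F(x₁,x₂,x₃) = (f(x₁), g(x₂), h(x₁,x₂,x₃)), and suppose the ODE ẋ = F(x) has a T-periodic solution x(t) in which both x₁(t) and x₂(t) are non-constant. Then the monodromy matrix of the variational equation along x(t) has eigenvalue 1 with (algebraic) multiplicity at least 2; hence the periodic orbit is not hyperbolic. -/
open Module

lemma aux_quot {E : Type*} [AddCommGroup E] [Module ℝ E] [FiniteDimensional ℝ E]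
    (N : E →ₗ[ℝ] E) (S : Submodule ℝ E) (hNS : ∀ s ∈ S, N s ∈ S)
    (v u : E) (hv : N v ∈ S) (hu : N u ∈ S)
    (hind : ∀ a b : ℝ, a • v + b • u ∈ S → a = 0 ∧ b = 0)
    (hn : 1 ≤ finrank ℝ E) :
    2 ≤ finrank ℝ (LinearMap.ker (N ^ finrank ℝ E)) := by
  classical
  set n := finrank ℝ E with hn_def
  have hle : S ≤ S.comap N := fun s hs => hNS s hs
  set Nb : (E ⧸ S) →ₗ[ℝ] (E ⧸ S) := S.mapQ S N hle with hNb
  have key : ∀ w : E, Nb (S.mkQ w) = S.mkQ (N w) := fun w => by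
    rw [Submodule.mkQ_apply, Submodule.mkQ_apply, hNb, Submodule.mapQ_apply]
  have keypow : ∀ (k : ℕ) (w : E), (Nb ^ k) (S.mkQ w) = S.mkQ ((N ^ k) w) := by
    intro k
    induction k with
    | zero => intro w; simp
    | succ k ih =>
      intro w
      rw [pow_succ', pow_succ', Module.End.mul_apply, Module.End.mul_apply, ih w, key]
  -- invariance of S under powers
  have hpowS : ∀ (k : ℕ) (s : E), s ∈ S → (N ^ k) s ∈ S := by
    intro k
    induction k with
    | zero => intro s hs; simpa using hs
    | succ k ih =>
      intro s hs
      rw [pow_succ, Module.End.mul_apply]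
      exact ih _ (hNS s hs)
  have hvS : (N ^ n) v ∈ S := by
    obtain ⟨m, hm⟩ := Nat.exists_eq_succ_of_ne_zero (by omega : n ≠ 0)
    rw [hm, pow_succ, Module.End.mul_apply]
    exact hpowS m _ hv
  have huS : (N ^ n) u ∈ S := by
    obtain ⟨m, hm⟩ := Nat.exists_eq_succ_of_ne_zero (by omega : n ≠ 0)
    rw [hm, pow_succ, Module.End.mul_apply]
    exact hpowS m _ hu
  -- mk v, mk u are independent elements of ker (Nb ^ n)
  have hmemv : S.mkQ v ∈ LinearMap.ker (Nb ^ n) := by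
    rw [LinearMap.mem_ker, keypow, ← LinearMap.mem_ker, Submodule.ker_mkQ]; exact hvS
  have hmemu : S.mkQ u ∈ LinearMap.ker (Nb ^ n) := by
    rw [LinearMap.mem_ker, keypow, ← LinearMap.mem_ker, Submodule.ker_mkQ]; exact huS
  have hindq : LinearIndependent ℝ ![S.mkQ v, S.mkQ u] := by
    rw [LinearIndependent.pair_iff]
    intro a b hab
    have : S.mkQ (a • v + b • u) = 0 := by
      simpa [map_add, map_smul] using hab
    rw [← LinearMap.mem_ker, Submodule.ker_mkQ] at this
    exact hind a b this
  have h2 : 2 ≤ finrank ℝ (LinearMap.ker (Nb ^ n)) := by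
    have hsp : Submodule.span ℝ (Set.range ![S.mkQ v, S.mkQ u]) ≤ LinearMap.ker (Nb ^ n) := by
      rw [Submodule.span_le]
      rintro z ⟨i, rfl⟩
      fin_cases i <;> simpa using (by first | exact hmemv | exact hmemu)
    calc 2 = finrank ℝ (Submodule.span ℝ (Set.range ![S.mkQ v, S.mkQ u])) := by
              rw [finrank_span_eq_card hindq]; simp
      _ ≤ finrank ℝ (LinearMap.ker (Nb ^ n)) := Submodule.finrank_mono hsp
  -- now compare kernels
  set P : E →ₗ[ℝ] E := N ^ n with hP
  set Q : (E ⧸ S) →ₗ[ℝ] (E ⧸ S) := Nb ^ n with hQ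
  have hcomm : Q.comp S.mkQ = S.mkQ.comp P := by
    ext w; exact keypow n w
  have hrangeQ : LinearMap.range Q = (LinearMap.range P).map S.mkQ := by
    rw [← LinearMap.range_comp_of_range_eq_top Q S.range_mkQ, hcomm, LinearMap.range_comp]
  set R : Submodule ℝ E := LinearMap.range P with hR
  set φ : R →ₗ[ℝ] (E ⧸ S) := S.mkQ.comp R.subtype with hφ
  have hrangeφ : LinearMap.range φ = R.map S.mkQ := by
    rw [hφ, LinearMap.range_comp, Submodule.range_subtype]
  have hkerφ : finrank ℝ (LinearMap.ker φ) ≤ finrank ℝ S := by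
    have h1 : finrank ℝ ((LinearMap.ker φ).map R.subtype) = finrank ℝ (LinearMap.ker φ) :=
      Submodule.finrank_map_subtype_eq R _
    have h2' : (LinearMap.ker φ).map R.subtype ≤ S := by
      rintro z ⟨⟨w, hw⟩, hker, rfl⟩
      have : S.mkQ w = 0 := hker
      rwa [← LinearMap.mem_ker, Submodule.ker_mkQ] at this
    rw [← h1]
    exact Submodule.finrank_mono h2'
  have e1 : finrank ℝ (LinearMap.range P) + finrank ℝ (LinearMap.ker P) = finrank ℝ E :=
    LinearMap.finrank_range_add_finrank_ker P
  have e2 : finrank ℝ (LinearMap.range Q) + finrank ℝ (LinearMap.ker Q) = finrank ℝ (E ⧸ S) :=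
    LinearMap.finrank_range_add_finrank_ker Q
  have e3 : finrank ℝ (E ⧸ S) + finrank ℝ S = finrank ℝ E :=
    Submodule.finrank_quotient_add_finrank S
  have e4 : finrank ℝ (LinearMap.range φ) + finrank ℝ (LinearMap.ker φ) = finrank ℝ R :=
    LinearMap.finrank_range_add_finrank_ker φ
  have e5 : finrank ℝ (LinearMap.range Q) = finrank ℝ (LinearMap.range φ) := by
    rw [hrangeQ, hrangeφ]
  have : finrank ℝ (LinearMap.ker Q) ≤ finrank ℝ (LinearMap.ker P) := by
    have hRr : finrank ℝ R = finrank ℝ (LinearMap.range P) := rfl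
    omega
  exact le_trans h2 this


open Set

lemma linear_ODE_eq {E : Type*} [NormedAddCommGroup E] [NormedSpace ℝ E]
    (B : ℝ → E →L[ℝ] E) (hB : Continuous B) (y z : ℝ → E)
    (hy : ∀ t, HasDerivAt y (B t (y t)) t) (hz : ∀ t, HasDerivAt z (B t (z t)) t)
    (h0 : y 0 = z 0) (t : ℝ) : y t = z t := by
  set a : ℝ := -(|t| + 1) with ha
  set b : ℝ := |t| + 1 with hb
  have hab : a < b := by
    have := abs_nonneg t
    rw [ha, hb]; linarith
  obtain ⟨C, hC⟩ := (isCompact_Icc (a := a) (b := b)).exists_bound_of_continuousOn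
    hB.continuousOn
  set proj : ℝ → ℝ := fun s => max a (min b s) with hproj
  have hproj_mem : ∀ s, proj s ∈ Icc a b := by
    intro s
    constructor
    · exact le_max_left _ _
    · exact max_le hab.le (min_le_left _ _)
  have hproj_eq : ∀ s ∈ Ioo a b, proj s = s := by
    intro s hs
    show a ⊔ (b ⊓ s) = s
    rw [min_eq_right hs.2.le, max_eq_right hs.1.le]
  set v : ℝ → E → E := fun s w => B (proj s) w with hv
  have hlip : ∀ s, LipschitzOnWith C.toNNReal (v s) univ := by
    intro s
    refine ((B (proj s)).lipschitz.weaken ?_).lipschitzOnWith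
    have h1 : ‖B (proj s)‖ ≤ C := hC _ (hproj_mem s)
    calc ‖B (proj s)‖₊ = ‖B (proj s)‖.toNNReal := (norm_toNNReal).symm
      _ ≤ C.toNNReal := Real.toNNReal_mono h1
  have heq : EqOn y z (Icc a b) := by
    refine ODE_solution_unique_of_mem_Icc (fun s _ => hlip s) (t₀ := 0) ?_
      (fun s _ => (hy s).continuousAt.continuousWithinAt) ?_ (fun _ _ => mem_univ _)
      (fun s _ => (hz s).continuousAt.continuousWithinAt) ?_ (fun _ _ => mem_univ _) h0
    · constructor
      · rw [ha]; have := abs_nonneg t; linarith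
      · rw [hb]; have := abs_nonneg t; linarith
    · intro s hs
      rw [hv]
      simp only [hproj_eq s hs]
      exact hy s
    · intro s hs
      rw [hv]
      simp only [hproj_eq s hs]
      exact hz s
  exact heq ⟨by rw [ha]; have := neg_abs_le t; linarith, by
    rw [hb]; have := le_abs_self t; linarith⟩


open Set Module



/-- For a feedforward system in which both forcing components `x₁, x₂` of a `T`-periodic
solution oscillate, the monodromy operator `Y T` of the variational equation has
eigenvalue `1` with algebraic multiplicity at least `2` (the generalised eigenspace of `1`
has dimension `≥ 2`); hence the periodic orbit is not hyperbolic. -/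
theorem stmt_7 {V1 V2 V3 : Type*}
    [NormedAddCommGroup V1] [NormedSpace ℝ V1] [FiniteDimensional ℝ V1]
    [NormedAddCommGroup V2] [NormedSpace ℝ V2] [FiniteDimensional ℝ V2]
    [NormedAddCommGroup V3] [NormedSpace ℝ V3] [FiniteDimensional ℝ V3]
    (f : V1 → V1) (g : V2 → V2) (h : V1 × V2 × V3 → V3)
    (hf : ContDiff ℝ (⊤ : ℕ∞) f) (hg : ContDiff ℝ (⊤ : ℕ∞) g) (hh : ContDiff ℝ (⊤ : ℕ∞) h)
    (x : ℝ → V1 × V2 × V3) (T : ℝ) (hT : 0 < T)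
    (hsol : ∀ t, HasDerivAt x (f (x t).1, g (x t).2.1, h (x t)) t)
    (hper : ∀ t, x (t + T) = x t)
    (h1 : ∃ s t, (x s).1 ≠ (x t).1) (h2 : ∃ s t, (x s).2.1 ≠ (x t).2.1)
    (Y : ℝ → (V1 × V2 × V3) →L[ℝ] (V1 × V2 × V3))
    (hY0 : Y 0 = ContinuousLinearMap.id ℝ (V1 × V2 × V3))
    (hYode : ∀ t, HasDerivAt Y
      (((fderiv ℝ (fun p : V1 × V2 × V3 => (f p.1, g p.2.1, h p)) (x t)).comp (Y t))) t) :
    2 ≤ Module.finrank ℝ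
      (LinearMap.ker
        (((Y T).toLinearMap - (LinearMap.id : (V1 × V2 × V3) →ₗ[ℝ] (V1 × V2 × V3)))
          ^ (Module.finrank ℝ (V1 × V2 × V3)))) := by
  classical
  -- basic continuity facts
  have hxc : Continuous x := continuous_iff_continuousAt.mpr fun t => (hsol t).continuousAt
  set D1 : ℝ → V1 →L[ℝ] V1 := fun t => fderiv ℝ f ((x t).1) with hD1def
  set D2 : ℝ → V2 →L[ℝ] V2 := fun t => fderiv ℝ g ((x t).2.1) with hD2def
  set A : ℝ → (V1 × V2 × V3) →L[ℝ] (V1 × V2 × V3) :=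
    fun t => fderiv ℝ (fun p : V1 × V2 × V3 => (f p.1, g p.2.1, h p)) (x t) with hAdef
  have hD1c : Continuous D1 :=
    (hf.continuous_fderiv (by simp)).comp (continuous_fst.comp hxc)
  have hD2c : Continuous D2 :=
    (hg.continuous_fderiv (by simp)).comp (continuous_fst.comp (continuous_snd.comp hxc))
  have hFcd : ContDiff ℝ (⊤ : ℕ∞) (fun p : V1 × V2 × V3 => (f p.1, g p.2.1, h p)) :=
    (hf.comp contDiff_fst).prodMk ((hg.comp (contDiff_fst.comp contDiff_snd)).prodMk hh)
  have hAc : Continuous A := (hFcd.continuous_fderiv (by simp)).comp hxc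
  -- derivative of F
  have hFd : ∀ p : V1 × V2 × V3,
      HasFDerivAt (fun p : V1 × V2 × V3 => (f p.1, g p.2.1, h p))
        (((fderiv ℝ f p.1).comp (ContinuousLinearMap.fst ℝ V1 (V2 × V3))).prod
          (((fderiv ℝ g p.2.1).comp ((ContinuousLinearMap.fst ℝ V2 V3).comp
            (ContinuousLinearMap.snd ℝ V1 (V2 × V3)))).prod (fderiv ℝ h p))) p := by
    intro p
    have hp1 : HasFDerivAt (fun p : V1 × V2 × V3 => f p.1)
        ((fderiv ℝ f p.1).comp (ContinuousLinearMap.fst ℝ V1 (V2 × V3))) p :=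
      ((hf.differentiable (by simp)) p.1).hasFDerivAt.comp p hasFDerivAt_fst
    have hp2 : HasFDerivAt (fun p : V1 × V2 × V3 => g p.2.1)
        ((fderiv ℝ g p.2.1).comp ((ContinuousLinearMap.fst ℝ V2 V3).comp
          (ContinuousLinearMap.snd ℝ V1 (V2 × V3)))) p :=
      ((hg.differentiable (by simp)) p.2.1).hasFDerivAt.comp p
        (hasFDerivAt_fst.comp p hasFDerivAt_snd)
    have hp3 : HasFDerivAt h (fderiv ℝ h p) p := ((hh.differentiable (by simp)) p).hasFDerivAt
    exact hp1.prodMk (hp2.prodMk hp3)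
  have hAeq : ∀ t, A t = (((fderiv ℝ f ((x t)).1).comp (ContinuousLinearMap.fst ℝ V1 (V2 × V3))).prod
          (((fderiv ℝ g ((x t)).2.1).comp ((ContinuousLinearMap.fst ℝ V2 V3).comp
            (ContinuousLinearMap.snd ℝ V1 (V2 × V3)))).prod (fderiv ℝ h (x t)))) :=
    fun t => (hFd (x t)).fderiv
  have hA1 : ∀ t (w : V1 × V2 × V3), (A t w).1 = D1 t w.1 := by
    intro t w; rw [hAeq t]; rfl
  have hA21 : ∀ t (w : V1 × V2 × V3), (A t w).2.1 = D2 t w.2.1 := by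
    intro t w; rw [hAeq t]; rfl
  -- derivative of t ↦ Y t u and its components
  have hYu : ∀ (u : V1 × V2 × V3) t, HasDerivAt (fun s => Y s u) (A t (Y t u)) t := by
    intro u t
    have h' := (hYode t).clm_apply (hasDerivAt_const t u)
    simpa using h'
  have hYu1 : ∀ (u : V1 × V2 × V3) t,
      HasDerivAt (fun s => (Y s u).1) (D1 t ((Y t u).1)) t := by
    intro u t
    have h' := (ContinuousLinearMap.fst ℝ V1 (V2 × V3)).hasFDerivAt.comp_hasDerivAt t (hYu u t)
    have h'' : HasDerivAt (fun s => (Y s u).1) ((A t (Y t u)).1) t := h'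
    rwa [hA1] at h''
  have hYu21 : ∀ (u : V1 × V2 × V3) t,
      HasDerivAt (fun s => (Y s u).2.1) (D2 t ((Y t u).2.1)) t := by
    intro u t
    have h' := ((ContinuousLinearMap.fst ℝ V2 V3).comp
      (ContinuousLinearMap.snd ℝ V1 (V2 × V3))).hasFDerivAt.comp_hasDerivAt t (hYu u t)
    have h'' : HasDerivAt (fun s => (Y s u).2.1) ((A t (Y t u)).2.1) t := h'
    rwa [hA21] at h''
  -- zero-solution uniqueness for components
  have hzero1 : ∀ u : V1 × V2 × V3, u.1 = 0 → (Y T u).1 = 0 := by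
    intro u hu1
    have := linear_ODE_eq D1 hD1c (fun s => (Y s u).1) (fun _ => 0) (hYu1 u)
      (fun t => by simpa using hasDerivAt_const t (0 : V1)) (by simp [hY0, hu1]) T
    simpa using this
  have hzero21 : ∀ u : V1 × V2 × V3, u.1 = 0 → u.2.1 = 0 → (Y T u).2.1 = 0 := by
    intro u _ hu2
    have := linear_ODE_eq D2 hD2c (fun s => (Y s u).2.1) (fun _ => 0) (hYu21 u)
      (fun t => by simpa using hasDerivAt_const t (0 : V2)) (by simp [hY0, hu2]) T
    simpa using this
  -- periodicity at T
  have hxT : x T = x 0 := by have := hper 0; rwa [zero_add] at this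
  -- the vector v
  set v : V1 × V2 × V3 := (f (x 0).1, g (x 0).2.1, h (x 0)) with hvdef
  have hd : ∀ t, HasDerivAt (fun s => (f (x s).1, g (x s).2.1, h (x s)))
      (A t (f (x t).1, g (x t).2.1, h (x t))) t := by
    intro t
    have h' := (hFd (x t)).comp_hasDerivAt t (hsol t)
    rw [hAeq t]
    exact h'
  have hMv : Y T v = v := by
    have := linear_ODE_eq A hAc (fun s => Y s v)
      (fun s => (f (x s).1, g (x s).2.1, h (x s))) (hYu v) hd (by simp [hY0, hvdef]) T
    rw [this, hvdef, hxT]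
  -- the vector u
  set u : V1 × V2 × V3 := (0, g (x 0).2.1, 0) with hudef
  have hu1 : (Y T u).1 = 0 := hzero1 u rfl
  have hx2 : ∀ t, HasDerivAt (fun s => (x s).2.1) (g ((x t).2.1)) t := by
    intro t
    exact ((ContinuousLinearMap.fst ℝ V2 V3).comp
      (ContinuousLinearMap.snd ℝ V1 (V2 × V3))).hasFDerivAt.comp_hasDerivAt t (hsol t)
  have hg2 : ∀ t, HasDerivAt (fun s => g ((x s).2.1)) (D2 t (g ((x t).2.1))) t := fun t =>
    ((hg.differentiable (by simp)) ((x t).2.1)).hasFDerivAt.comp_hasDerivAt t (hx2 t)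
  have hu21 : (Y T u).2.1 = u.2.1 := by
    have := linear_ODE_eq D2 hD2c (fun s => (Y s u).2.1) (fun s => g ((x s).2.1))
      (hYu21 u) hg2 (by simp [hY0, hudef]) T
    rw [this, hudef, hxT]
  -- nonvanishing of the forcing components
  have hx1 : ∀ t, HasDerivAt (fun s => (x s).1) (f ((x t).1)) t := by
    intro t
    exact (ContinuousLinearMap.fst ℝ V1 (V2 × V3)).hasFDerivAt.comp_hasDerivAt t (hsol t)
  have hf1 : ∀ t, HasDerivAt (fun s => f ((x s).1)) (D1 t (f ((x t).1))) t := fun t =>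
    ((hf.differentiable (by simp)) ((x t).1)).hasFDerivAt.comp_hasDerivAt t (hx1 t)
  have hf0 : f ((x 0).1) ≠ 0 := by
    intro h0
    have hall : ∀ t, f ((x t).1) = 0 := by
      intro t
      have := linear_ODE_eq D1 hD1c (fun s => f ((x s).1)) (fun _ => 0) hf1
        (fun t => by simpa using hasDerivAt_const t (0 : V1)) (by simpa using h0) t
      simpa using this
    have hdiff : Differentiable ℝ (fun s => (x s).1) := fun t => (hx1 t).differentiableAt
    have hfz : ∀ t, fderiv ℝ (fun s => (x s).1) t = 0 := by
      intro t
      have hzero : HasDerivAt (fun s => (x s).1) 0 t := hall t ▸ hx1 t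
      have hsr : (ContinuousLinearMap.smulRight (1 : ℝ →L[ℝ] ℝ) (0 : V1)) = 0 := by
        ext r; simp
      have hz' : HasFDerivAt (fun s => (x s).1) (0 : ℝ →L[ℝ] V1) t := hsr ▸ hzero.hasFDerivAt
      exact hz'.fderiv
    obtain ⟨s, t', hne⟩ := h1
    exact hne (is_const_of_fderiv_eq_zero hdiff hfz s t')
  have hg0 : g ((x 0).2.1) ≠ 0 := by
    intro h0
    have hall : ∀ t, g ((x t).2.1) = 0 := by
      intro t
      have := linear_ODE_eq D2 hD2c (fun s => g ((x s).2.1)) (fun _ => 0) hg2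
        (fun t => by simpa using hasDerivAt_const t (0 : V2)) (by simpa using h0) t
      simpa using this
    have hdiff : Differentiable ℝ (fun s => (x s).2.1) := fun t => (hx2 t).differentiableAt
    have hfz : ∀ t, fderiv ℝ (fun s => (x s).2.1) t = 0 := by
      intro t
      have hzero : HasDerivAt (fun s => (x s).2.1) 0 t := hall t ▸ hx2 t
      have hsr : (ContinuousLinearMap.smulRight (1 : ℝ →L[ℝ] ℝ) (0 : V2)) = 0 := by
        ext r; simp
      have hz' : HasFDerivAt (fun s => (x s).2.1) (0 : ℝ →L[ℝ] V2) t := hsr ▸ hzero.hasFDerivAt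
      exact hz'.fderiv
    obtain ⟨s, t', hne⟩ := h2
    exact hne (is_const_of_fderiv_eq_zero hdiff hfz s t')
  -- the submodule S
  set S : Submodule ℝ (V1 × V2 × V3) :=
    (⊥ : Submodule ℝ V1).prod ((⊥ : Submodule ℝ V2).prod (⊤ : Submodule ℝ V3)) with hSdef
  have hmemS : ∀ p : V1 × V2 × V3, p ∈ S ↔ p.1 = 0 ∧ p.2.1 = 0 := by
    intro p
    simp [hSdef, Submodule.mem_prod]
  set N : (V1 × V2 × V3) →ₗ[ℝ] (V1 × V2 × V3) :=
    (Y T).toLinearMap - LinearMap.id with hNdef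
  have hNapp : ∀ p, N p = Y T p - p := by
    intro p; simp [hNdef]
  have hNS : ∀ s ∈ S, N s ∈ S := by
    intro p hp
    rw [hmemS] at hp
    rw [hmemS, hNapp]
    constructor
    · show (Y T p).1 - p.1 = 0
      rw [hzero1 p hp.1, hp.1, sub_zero]
    · show (Y T p).2.1 - p.2.1 = 0
      rw [hzero21 p hp.1 hp.2, hp.2, sub_zero]
  have hvS : N v ∈ S := by
    rw [hNapp, hMv, sub_self]
    exact zero_mem S
  have huS : N u ∈ S := by
    rw [hmemS, hNapp]
    constructor
    · show (Y T u).1 - u.1 = 0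
      rw [hu1]; simp [hudef]
    · show (Y T u).2.1 - u.2.1 = 0
      rw [hu21, sub_self]
  have hind : ∀ a b : ℝ, a • v + b • u ∈ S → a = 0 ∧ b = 0 := by
    intro a b hab
    rw [hmemS] at hab
    have ha : a = 0 := by
      have h1' : a • f ((x 0).1) + b • (0 : V1) = 0 := hab.1
      rw [smul_zero, add_zero] at h1'
      rcases smul_eq_zero.mp h1' with h | h
      · exact h
      · exact absurd h hf0
    refine ⟨ha, ?_⟩
    have h2' : a • g ((x 0).2.1) + b • g ((x 0).2.1) = 0 := hab.2
    rw [ha, zero_smul, zero_add] at h2'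
    rcases smul_eq_zero.mp h2' with h | h
    · exact h
    · exact absurd h hg0
  have hn : 1 ≤ finrank ℝ (V1 × V2 × V3) := by
    haveI : Nontrivial (V1 × V2 × V3) :=
      ⟨⟨v, 0, fun hc => hf0 (by rw [hvdef] at hc; exact congrArg Prod.fst hc)⟩⟩
    exact Module.finrank_pos
  exact aux_quot N S hNS v u hvS huS hind hn
end

section
/- Let ⋈ be an equivalence relation on the finite node set C of a network G with the property (balanced): whenever c ⋈ d there is an arrow-type-preserving bijection β : I(c) → I(d) between input arrow sets with T(e) ⋈ T(β(e)) for all e ∈ I(c). Suppose the admissible vector field components satisfy the pullback condition f_d(x_d, x_{T(d)}) = f_c(x_d, β*x_{T(d)}) for every input isomorphism β. Then for every x in the polydiagonal Δ_⋈ and every pair c ⋈ d, f_c(x) = f_d(x); hence f maps Δ_⋈ into itself (Δ_⋈ is invariant under every admissible map). -/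
/-- A balanced colouring `⋈` of a network makes the polydiagonal `Δ_⋈` invariant under
every admissible map.  Here a network has nodes `C`, arrows `A` with head `H`, tail `Tl`,
and arrow types; `I(c) = {a // H a = c}`; an admissible map has components
`x ↦ fhat c (x c) (fun e ∈ I(c) => x (Tl e))` satisfying the pullback condition for all
arrow-type-preserving bijections `β : I(c) ≃ I(d)`.  If `⋈` is balanced (each pair
`c ⋈ d` admits a type-preserving input bijection `β` with `Tl e ⋈ Tl (β e)`), then for all
`x ∈ Δ_⋈` and `c ⋈ d` the components agree, i.e. the image of `x` again lies in `Δ_⋈`. -/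
theorem stmt_19 {C A τ V : Type*} [Fintype C] [Fintype A]
    (H Tl : A → C) (arrowType : A → τ) (bow : Setoid C)
    (fhat : (c : C) → V → ({a : A // H a = c} → V) → V)
    (pullback : ∀ (c d : C) (β : {a : A // H a = c} ≃ {a : A // H a = d}),
      (∀ e : {a : A // H a = c}, arrowType ((β e) : {a : A // H a = d}).1 = arrowType e.1) →
      ∀ (vv : V) (y : {a : A // H a = d} → V),
        fhat d vv y = fhat c vv (fun e => y (β e)))
    (balanced : ∀ c d, bow.r c d →
      ∃ β : {a : A // H a = c} ≃ {a : A // H a = d},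
        (∀ e : {a : A // H a = c},
          arrowType ((β e) : {a : A // H a = d}).1 = arrowType e.1) ∧
        (∀ e : {a : A // H a = c}, bow.r (Tl e.1) (Tl ((β e) : {a : A // H a = d}).1))) :
    ∀ x : C → V, (∀ c d, bow.r c d → x c = x d) →
      (∀ c d, bow.r c d →
        fhat c (x c) (fun e => x (Tl e.1)) = fhat d (x d) (fun e => x (Tl e.1))) ∧
      (fun c => fhat c (x c) (fun e => x (Tl e.1))) ∈
        {y : C → V | ∀ c d, bow.r c d → y c = y d} := by
  intro x hx
  have key : ∀ c d, bow.r c d →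
      fhat c (x c) (fun e => x (Tl e.1)) = fhat d (x d) (fun e => x (Tl e.1)) := by
    intro c d hcd
    obtain ⟨β, hβ, hT⟩ := balanced c d hcd
    rw [pullback c d β hβ (x d) (fun e => x (Tl e.1))]
    have hxd : x d = x c := (hx c d hcd).symm
    rw [hxd]
    congr 1
    funext e
    exact hx _ _ (hT e)
  exact ⟨key, fun c d hcd => key c d hcd⟩
end
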